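/- arXiv:1212.4646 — 3 statements merged into one kernel-verified Lean document; each statement's English description precedes it below -/
import Mathlib

section
/- Let G be a finite abelian group, H a subgroup of G, p : G → G/H the projection and σ : G/H → G a section of p (i.e. p ∘ σ = id). Define T_{1,G,H} : ℓ²(G,E) → ℓ²((G/H) × Ĥ, E) by T_{1,G,H}f(x',χ') = 𝔼_{x∈G, p(x)=x'} χ'(x − σ(x')) f(x) (the average over the coset p^{−1}(x'); note x − σ(x') ∈ H), and define T_{2,G,H} : ℓ²((G/H) × Ĥ, E) → ℓ²(Ĝ,E) by T_{2,G,H}g(χ) = 𝔼_{x'∈G/H} χ(σ(x')) g(x', χ|_H). Then: (a) T_G = T_{2,G,H} ∘ T_{1,G,H} (for E = ℂ, hence for every E); (b) for every complex Banach space E, ‖T_{1,G,H} ⊗ 1_E‖ = ‖T_H ⊗ 1_E‖ and ‖T_{2,G,H} ⊗ 1_E‖ = ‖T_{G/H} ⊗ 1_E‖. -/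
set_option autoImplicit false
noncomputable section

/-- Average of a real-valued family over a finite index type (junk value if infinite). -/
def eAvg {I : Type*} (f : I → ℝ) : ℝ := (∑ᶠ x, f x) / Nat.card I

/-- Average of a vector-valued family. -/
def vAvg {I : Type*} {E : Type*} [AddCommGroup E] [Module ℂ E] (f : I → E) : E :=
  (Nat.card I : ℂ)⁻¹ • ∑ᶠ x, f x

/-- Averaged ℓ² norm on functions `I → E`. -/
def l2N {I : Type*} {E : Type*} [NormedAddCommGroup E] (f : I → E) : ℝ :=
  Real.sqrt (eAvg fun x => ‖f x‖ ^ 2)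

/-- Operator norm of `T : ℓ²(I,E) → ℓ²(J,E)` with respect to the averaged ℓ² norms,
as the least nonnegative constant `C` with `l2N (T f) ≤ C * l2N f`. -/
def opN {I J : Type*} {E : Type*} [NormedAddCommGroup E]
    (T : (I → E) → (J → E)) : ℝ :=
  sInf {C : ℝ | 0 ≤ C ∧ ∀ f, l2N (T f) ≤ C * l2N f}

/-- The vector-valued Fourier transform `T_G ⊗ 1_E`. -/
def fourierT {G : Type*} [AddMonoid G] {E : Type*} [NormedAddCommGroup E] [NormedSpace ℂ E]
    (f : G → E) : AddChar G ℂ → E :=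
  fun χ => vAvg fun x => χ x • f x

/-- `‖T_G ⊗ 1_E‖`. -/
def fourierOpN (G : Type*) [AddMonoid G] (E : Type*) [NormedAddCommGroup E]
    [NormedSpace ℂ E] : ℝ :=
  opN (fun f : G → E => fourierT f)

open scoped Classical in
/-- Extension of a character of a subgroup `H` of `G` to `G` by zero. -/
def extChar {G : Type*} [AddCommGroup G] (H : AddSubgroup G) (χ : AddChar H ℂ) (g : G) : ℂ :=
  if h : g ∈ H then χ (⟨g, h⟩ : H) else 0

/-- The operator `T_{1,G,H}` (block diagonal with blocks `T_H`). -/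
def T1 {G : Type*} [AddCommGroup G] (H : AddSubgroup G) (σ : G ⧸ H → G)
    {E : Type*} [NormedAddCommGroup E] [NormedSpace ℂ E] (f : G → E) :
    (G ⧸ H) × AddChar H ℂ → E :=
  fun p => vAvg fun x : {x : G // QuotientAddGroup.mk x = p.1} =>
    extChar H p.2 (x.1 - σ p.1) • f x.1

/-- The operator `T_{2,G,H}` (block diagonal with blocks obtained from `T_{G/H}`). -/
def T2 {G : Type*} [AddCommGroup G] (H : AddSubgroup G) (σ : G ⧸ H → G)
    {E : Type*} [NormedAddCommGroup E] [NormedSpace ℂ E]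
    (g : (G ⧸ H) × AddChar H ℂ → E) : AddChar G ℂ → E :=
  fun χ => vAvg fun x' : G ⧸ H => χ (σ x') • g (x', χ.compAddMonoidHom H.subtype)


set_option linter.unusedSectionVars false

open Function Finset

section avgLemmas
variable {I J E : Type*}

lemma eAvg_eq_sum [Fintype I] (f : I → ℝ) :
    eAvg f = (∑ x, f x) / (Nat.card I) := by
  rw [eAvg, finsum_eq_sum_of_fintype]

lemma vAvg_eq_sum [Fintype I] [AddCommGroup E] [Module ℂ E] (f : I → E) :
    vAvg f = ((Nat.card I : ℂ))⁻¹ • ∑ x, f x := by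
  rw [vAvg, finsum_eq_sum_of_fintype]

lemma eAvg_comp_equiv [Finite J] (e : I ≃ J) (f : J → ℝ) :
    eAvg (fun i => f (e i)) = eAvg f := by
  have : Finite I := Finite.of_equiv J e.symm
  have := Fintype.ofFinite I
  have := Fintype.ofFinite J
  rw [eAvg_eq_sum, eAvg_eq_sum, e.sum_comp, Nat.card_congr e]

lemma vAvg_comp_equiv [Finite J] [AddCommGroup E] [Module ℂ E] (e : I ≃ J) (f : J → E) :
    vAvg (fun i => f (e i)) = vAvg f := by
  have : Finite I := Finite.of_equiv J e.symm
  have := Fintype.ofFinite I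
  have := Fintype.ofFinite J
  rw [vAvg_eq_sum, vAvg_eq_sum, e.sum_comp, Nat.card_congr e]

lemma vAvg_smul [Finite I] [AddCommGroup E] [Module ℂ E] (c : ℂ) (f : I → E) :
    vAvg (fun i => c • f i) = c • vAvg f := by
  have := Fintype.ofFinite I
  rw [vAvg_eq_sum, vAvg_eq_sum, ← Finset.smul_sum, smul_comm]

lemma vAvg_zero [AddCommGroup E] [Module ℂ E] :
    vAvg (fun _ : I => (0 : E)) = 0 := by
  simp [vAvg]

lemma eAvg_nonneg {f : I → ℝ} (hf : ∀ i, 0 ≤ f i) : 0 ≤ eAvg f :=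
  div_nonneg (finsum_nonneg hf) (Nat.cast_nonneg _)

lemma eAvg_mono [Finite I] {f g : I → ℝ} (h : ∀ i, f i ≤ g i) : eAvg f ≤ eAvg g := by
  have := Fintype.ofFinite I
  rw [eAvg_eq_sum, eAvg_eq_sum]
  rcases Nat.eq_zero_or_pos (Nat.card I) with h0 | h0
  · have : IsEmpty I := Fintype.card_eq_zero_iff.mp (by rwa [Nat.card_eq_fintype_card] at h0)
    simp
  · rw [div_le_div_iff_of_pos_right (by exact_mod_cast h0)]
    exact Finset.sum_le_sum fun i _ => h i

lemma eAvg_const [Finite I] [Nonempty I] (c : ℝ) : eAvg (fun _ : I => c) = c := by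
  have := Fintype.ofFinite I
  have h0 : (Fintype.card I : ℝ) ≠ 0 := by
    exact_mod_cast Fintype.card_ne_zero
  rw [eAvg_eq_sum, Finset.sum_const, Finset.card_univ, nsmul_eq_mul,
    Nat.card_eq_fintype_card, mul_comm, mul_div_assoc, div_self h0, mul_one]

lemma eAvg_mul_left [Finite I] (c : ℝ) (f : I → ℝ) :
    eAvg (fun i => c * f i) = c * eAvg f := by
  have := Fintype.ofFinite I
  rw [eAvg_eq_sum, eAvg_eq_sum, ← Finset.mul_sum, mul_div_assoc]

lemma eAvg_prod {A B : Type*} [Finite A] [Finite B] (f : A × B → ℝ) :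
    eAvg f = eAvg fun a => eAvg fun b => f (a, b) := by
  have := Fintype.ofFinite A
  have := Fintype.ofFinite B
  simp only [eAvg_eq_sum]
  rw [Fintype.sum_prod_type, ← Finset.sum_div, div_div, Nat.card_prod]
  push_cast
  ring_nf

lemma eAvg_congr {f g : I → ℝ} (h : ∀ i, f i = g i) : eAvg f = eAvg g := by
  congr 1; exact funext h

end avgLemmas

section l2Lemmas
variable {I J E : Type*} [NormedAddCommGroup E]

lemma l2N_nonneg (f : I → E) : 0 ≤ l2N f := Real.sqrt_nonneg _

lemma l2N_sq (f : I → E) : l2N f ^ 2 = eAvg fun x => ‖f x‖ ^ 2 :=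
  Real.sq_sqrt (eAvg_nonneg fun _ => sq_nonneg _)

lemma l2N_le {F : Type*} [NormedAddCommGroup F] {f : J → E} {g : I → F} {C : ℝ} (hC : 0 ≤ C)
    (h : (eAvg fun j => ‖f j‖ ^ 2) ≤ C ^ 2 * eAvg fun i => ‖g i‖ ^ 2) :
    l2N f ≤ C * l2N g := by
  rw [l2N, l2N]
  calc Real.sqrt (eAvg fun j => ‖f j‖ ^ 2) ≤
      Real.sqrt (C ^ 2 * eAvg fun i => ‖g i‖ ^ 2) := Real.sqrt_le_sqrt h
    _ = C * Real.sqrt (eAvg fun i => ‖g i‖ ^ 2) := by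
        rw [Real.sqrt_mul (sq_nonneg C), Real.sqrt_sq hC]

lemma sq_of_l2N_le {F : Type*} [NormedAddCommGroup F] {f : J → E} {g : I → F} {C : ℝ}
    (h : l2N f ≤ C * l2N g) :
    (eAvg fun j => ‖f j‖ ^ 2) ≤ C ^ 2 * eAvg fun i => ‖g i‖ ^ 2 := by
  have h0 : 0 ≤ l2N f := l2N_nonneg f
  have h2 : l2N f ^ 2 ≤ (C * l2N g) ^ 2 := pow_le_pow_left₀ h0 h 2
  rw [mul_pow, l2N_sq, l2N_sq] at h2
  exact h2

end l2Lemmas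

lemma eAvg_div_const {I : Type*} [Finite I] (f : I → ℝ) (c : ℝ) :
    eAvg (fun i => f i / c) = eAvg f / c := by
  have := Fintype.ofFinite I
  rw [eAvg_eq_sum, eAvg_eq_sum, ← Finset.sum_div, div_right_comm]
section quotLemmas
variable {G : Type*} [AddCommGroup G] (H : AddSubgroup G)
  (σ : G ⧸ H → G) (hσ : ∀ x' : G ⧸ H, QuotientAddGroup.mk (σ x') = x')

/-- The fiber of the quotient map over `x'` is equivalent to `H`. -/
def fiberEquiv (x' : G ⧸ H) : H ≃ {x : G // (QuotientAddGroup.mk x : G ⧸ H) = x'} where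
  toFun h := ⟨σ x' + h.1, by
    conv_rhs => rw [← hσ x']
    rw [QuotientAddGroup.eq_iff_sub_mem, add_sub_cancel_left]
    exact h.2⟩
  invFun x := ⟨x.1 - σ x', by
    rw [← QuotientAddGroup.eq_iff_sub_mem, x.2, hσ]⟩
  left_inv h := by ext; simp
  right_inv x := by ext; simp

variable [Finite G]

include σ hσ

lemma card_fiber (x' : G ⧸ H) :
    Nat.card {x : G // (QuotientAddGroup.mk x : G ⧸ H) = x'} = Nat.card H :=
  (Nat.card_congr (fiberEquiv H σ hσ x')).symm

lemma eAvg_quot (f : G → ℝ) :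
    eAvg f = eAvg fun x' : G ⧸ H =>
      eAvg fun x : {x : G // (QuotientAddGroup.mk x : G ⧸ H) = x'} => f x.1 := by
  classical
  have := Fintype.ofFinite G
  have : Fintype (G ⧸ H) := Fintype.ofFinite _
  simp only [eAvg_eq_sum, card_fiber H σ hσ]
  rw [← Fintype.sum_fiberwise (fun x : G => (QuotientAddGroup.mk x : G ⧸ H)) f,
    ← Finset.sum_div, div_div, AddSubgroup.card_eq_card_quotient_mul_card_addSubgroup H]
  push_cast
  ring_nf

lemma vAvg_quot {E : Type*} [AddCommGroup E] [Module ℂ E] (f : G → E) :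
    vAvg f = vAvg fun x' : G ⧸ H =>
      vAvg fun x : {x : G // (QuotientAddGroup.mk x : G ⧸ H) = x'} => f x.1 := by
  classical
  have := Fintype.ofFinite G
  have : Fintype (G ⧸ H) := Fintype.ofFinite _
  simp only [vAvg_eq_sum, card_fiber H σ hσ]
  rw [← Fintype.sum_fiberwise (fun x : G => (QuotientAddGroup.mk x : G ⧸ H)) f,
    ← Finset.smul_sum, AddSubgroup.card_eq_card_quotient_mul_card_addSubgroup H, smul_smul]
  congr 1
  push_cast
  rw [mul_inv]

end quotLemmas
set_option linter.unusedSectionVars false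

section charLemmas
variable {G : Type*} [AddCommGroup G] [Finite G] (H : AddSubgroup G)
  (σ : G ⧸ H → G) (hσ : ∀ x' : G ⧸ H, QuotientAddGroup.mk (σ x') = x')

/-- Restriction of characters, as a monoid hom. -/
def resHom : AddChar G ℂ →* AddChar H ℂ where
  toFun χ := χ.compAddMonoidHom H.subtype
  map_one' := by ext h; simp
  map_mul' χ₁ χ₂ := by ext h; simp

/-- Lift of a character of the quotient. -/
def liftChar (κ : AddChar (G ⧸ H) ℂ) : AddChar G ℂ :=
  κ.compAddMonoidHom (QuotientAddGroup.mk' H)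

lemma liftChar_apply (κ : AddChar (G ⧸ H) ℂ) (x : G) :
    liftChar H κ x = κ (QuotientAddGroup.mk x) := rfl

lemma liftChar_injective : Function.Injective (liftChar H) :=
  AddChar.compAddMonoidHom_injective_left _ (QuotientAddGroup.mk'_surjective H)

lemma res_liftChar (κ : AddChar (G ⧸ H) ℂ) : resHom H (liftChar H κ) = 1 := by
  ext h
  have : (QuotientAddGroup.mk (h : G) : G ⧸ H) = 0 := (QuotientAddGroup.eq_zero_iff _).mpr h.2
  simp only [resHom, MonoidHom.coe_mk, OneHom.coe_mk, AddChar.compAddMonoidHom_apply,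
    AddChar.one_apply]
  rw [liftChar_apply, AddSubgroup.coe_subtype, this, AddChar.map_zero_eq_one]

lemma ker_apply_eq {χ : AddChar G ℂ} (hχ : resHom H χ = 1) {a b : G}
    (hab : (QuotientAddGroup.mk a : G ⧸ H) = QuotientAddGroup.mk b) : χ a = χ b := by
  have hmem : a - b ∈ H := QuotientAddGroup.eq_iff_sub_mem.mp hab
  have h1 : χ (a - b) = 1 := by
    have := DFunLike.congr_fun hχ (⟨a - b, hmem⟩ : H)
    simpa [resHom] using this
  calc χ a = χ (b + (a - b)) := by rw [add_sub_cancel]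
    _ = χ b * χ (a - b) := AddChar.map_add_eq_mul χ _ _
    _ = χ b := by rw [h1, mul_one]

/-- Characters of the quotient correspond to characters trivial on `H`. -/
def kerEquiv : AddChar (G ⧸ H) ℂ ≃ MonoidHom.ker (resHom H) where
  toFun κ := ⟨liftChar H κ, res_liftChar H κ⟩
  invFun c :=
    { toFun := fun x' => c.1 (σ x')
      map_zero_eq_one' := by
        show c.1 (σ 0) = 1
        have : c.1 (σ 0) = c.1 0 := ker_apply_eq H c.2 (by rw [hσ]; rfl)
        rw [this, AddChar.map_zero_eq_one]
      map_add_eq_mul' := fun x' y' => by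
        show c.1 (σ (x' + y')) = c.1 (σ x') * c.1 (σ y')
        have : c.1 (σ (x' + y')) = c.1 (σ x' + σ y') :=
          ker_apply_eq H c.2 (by rw [hσ, QuotientAddGroup.mk_add, hσ, hσ])
        rw [this, AddChar.map_add_eq_mul] }
  left_inv κ := by
    ext x'
    simp only [liftChar_apply, AddChar.coe_mk]
    exact congrArg κ (hσ x')
  right_inv c := by
    apply Subtype.ext
    ext x
    rw [liftChar_apply]
    exact ker_apply_eq H c.2 (by rw [hσ])

lemma card_addChar (A : Type*) [AddCommGroup A] [Finite A] :
    Nat.card (AddChar A ℂ) = Nat.card A := by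
  have := Fintype.ofFinite A
  rw [Nat.card_eq_fintype_card, Nat.card_eq_fintype_card, AddChar.card_eq]

include σ hσ in
lemma res_surjective : Function.Surjective (resHom (G := G) H) := by
  have h1 : Nat.card (AddChar G ℂ) =
      Nat.card (MonoidHom.range (resHom H)) * Nat.card (MonoidHom.ker (resHom H)) := by
    rw [Subgroup.card_eq_card_quotient_mul_card_subgroup (MonoidHom.ker (resHom H))]
    congr 1
    exact Nat.card_congr (QuotientGroup.quotientKerEquivRange (resHom H)).toEquiv
  have hker : Nat.card (MonoidHom.ker (resHom H)) = Nat.card (G ⧸ H) := by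
    rw [← Nat.card_congr (kerEquiv H σ hσ), card_addChar]
  have hQpos : 0 < Nat.card (G ⧸ H) := Nat.card_pos
  have h2 : Nat.card (MonoidHom.range (resHom H)) = Nat.card (AddChar H ℂ) := by
    rw [card_addChar (↥H)]
    have hG : Nat.card G = Nat.card (G ⧸ H) * Nat.card H :=
      AddSubgroup.card_eq_card_quotient_mul_card_addSubgroup H
    rw [card_addChar G, hG, hker] at h1
    have h3 : Nat.card (G ⧸ H) * Nat.card (↥H) =
        Nat.card (G ⧸ H) * Nat.card (MonoidHom.range (resHom H)) := by
      rw [h1, mul_comm]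
    exact (Nat.eq_of_mul_eq_mul_left hQpos h3).symm
  have := Subgroup.eq_top_of_card_eq _ h2
  intro ψ
  have : ψ ∈ MonoidHom.range (resHom H) := by rw [this]; trivial
  exact this

end charLemmas
section charLemmas2
variable {G : Type*} [AddCommGroup G] [Finite G] (H : AddSubgroup G)
  (σ : G ⧸ H → G) (hσ : ∀ x' : G ⧸ H, QuotientAddGroup.mk (σ x') = x')

include σ hσ in
lemma exists_section : ∃ s : AddChar H ℂ → AddChar G ℂ,
    (∀ ψ, resHom H (s ψ) = ψ) ∧ s 1 = 1 := by
  have hs := res_surjective H σ hσ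
  refine ⟨fun ψ => Function.surjInv hs ψ * (Function.surjInv hs 1)⁻¹, fun ψ => ?_, ?_⟩
  · rw [map_mul, map_inv, Function.surjInv_eq hs, Function.surjInv_eq hs, inv_one, mul_one]
  · exact mul_inv_cancel _

include σ hσ in
lemma exists_prodEquiv : ∃ (s : AddChar H ℂ → AddChar G ℂ)
    (e : AddChar H ℂ × AddChar (G ⧸ H) ℂ ≃ AddChar G ℂ),
    (∀ p, e p = s p.1 * liftChar H p.2) ∧ (∀ ψ, resHom H (s ψ) = ψ) ∧ s 1 = 1 := by
  obtain ⟨s, hs, hs1⟩ := exists_section H σ hσ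
  have hres : ∀ p : AddChar H ℂ × AddChar (G ⧸ H) ℂ,
      resHom H (s p.1 * liftChar H p.2) = p.1 := fun p => by
    rw [map_mul, hs, res_liftChar, mul_one]
  have hinj : Function.Injective (fun p : AddChar H ℂ × AddChar (G ⧸ H) ℂ =>
      s p.1 * liftChar H p.2) := by
    rintro ⟨ψ₁, κ₁⟩ ⟨ψ₂, κ₂⟩ hp
    simp only at hp
    have h1 : ψ₁ = ψ₂ := by
      have h := congrArg (resHom H) hp
      rwa [hres (ψ₁, κ₁), hres (ψ₂, κ₂)] at h
    subst h1
    have h2 : liftChar H κ₁ = liftChar H κ₂ := mul_left_cancel hp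
    exact Prod.ext rfl (liftChar_injective H h2)
  have hsurj2 : Function.Surjective (fun p : AddChar H ℂ × AddChar (G ⧸ H) ℂ =>
      s p.1 * liftChar H p.2) := by
    intro χ
    set ψ := resHom H χ with hψ
    have hmem : χ * (s ψ)⁻¹ ∈ MonoidHom.ker (resHom H) := by
      rw [MonoidHom.mem_ker, map_mul, map_inv, hs, ← hψ, mul_inv_cancel]
    refine ⟨(ψ, (kerEquiv H σ hσ).symm ⟨χ * (s ψ)⁻¹, hmem⟩), ?_⟩
    have hl : liftChar H ((kerEquiv H σ hσ).symm ⟨χ * (s ψ)⁻¹, hmem⟩) = χ * (s ψ)⁻¹ :=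
      congrArg Subtype.val ((kerEquiv H σ hσ).apply_symm_apply ⟨χ * (s ψ)⁻¹, hmem⟩)
    simp only [hl]
    rw [mul_comm χ _, mul_inv_cancel_left]
  exact ⟨s, Equiv.ofBijective _ ⟨hinj, hsurj2⟩, fun p => rfl, hs, hs1⟩

end charLemmas2
section Tlemmas
variable {G : Type*} [AddCommGroup G] [Finite G] (H : AddSubgroup G)
  (σ : G ⧸ H → G) (hσ : ∀ x' : G ⧸ H, QuotientAddGroup.mk (σ x') = x')
  {E : Type*} [NormedAddCommGroup E] [NormedSpace ℂ E]

include hσ in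
lemma T1_eq (f : G → E) (x' : G ⧸ H) (ψ : AddChar H ℂ) :
    T1 H σ f (x', ψ) = fourierT (fun h : ↥H => f (σ x' + h)) ψ := by
  rw [T1, fourierT]
  rw [← vAvg_comp_equiv (fiberEquiv H σ hσ x')
      (fun x : {x : G // (QuotientAddGroup.mk x : G ⧸ H) = x'} =>
        extChar H ψ (x.1 - σ x') • f x.1)]
  congr 1
  funext h
  simp only [fiberEquiv, Equiv.coe_fn_mk, add_sub_cancel_left]
  rw [extChar, dif_pos h.2]

include hσ in
lemma eAvg_G_eq (u : G → ℝ) :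
    eAvg u = eAvg fun x' : G ⧸ H => eAvg fun h : ↥H => u (σ x' + h) := by
  rw [eAvg_quot H σ hσ u]
  apply eAvg_congr
  intro x'
  rw [← eAvg_comp_equiv (fiberEquiv H σ hσ x')
      (fun x : {x : G // (QuotientAddGroup.mk x : G ⧸ H) = x'} => u x.1)]
  rfl

end Tlemmas

/-- the factorization `T_G = T₂ ∘ T₁` and the norms of the blocks. -/
theorem statement1 {G : Type*} [AddCommGroup G] [Finite G] (H : AddSubgroup G)
    (σ : G ⧸ H → G) (hσ : ∀ x' : G ⧸ H, QuotientAddGroup.mk (σ x') = x')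
    (E : Type*) [NormedAddCommGroup E] [NormedSpace ℂ E] [CompleteSpace E] :
    (∀ f : G → E, fourierT f = T2 H σ (T1 H σ f)) ∧
    opN (fun f : G → E => T1 H σ f) = fourierOpN (↥H) E ∧
    opN (fun g : (G ⧸ H) × AddChar H ℂ → E => T2 H σ g) = fourierOpN (G ⧸ H) E := by
  classical
  refine ⟨?_, ?_, ?_⟩
  · -- factorization
    intro f
    funext χ
    have h1 : fourierT f χ = vAvg fun x' : G ⧸ H =>
        vAvg fun x : {x : G // (QuotientAddGroup.mk x : G ⧸ H) = x'} => χ x.1 • f x.1 := by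
      rw [fourierT]
      exact vAvg_quot H σ hσ _
    rw [h1, T2]
    congr 1
    funext x'
    rw [T1, ← vAvg_smul]
    congr 1
    funext x
    have hmem : x.1 - σ x' ∈ H := by
      rw [← QuotientAddGroup.eq_iff_sub_mem, x.2, hσ]
    rw [extChar, dif_pos hmem, AddChar.compAddMonoidHom_apply, AddSubgroup.coe_subtype,
      smul_smul, ← AddChar.map_add_eq_mul]
    have harg : σ x' + (x.1 - σ x') = x.1 := by abel
    rw [harg]
  · -- T1 norm
    rw [fourierOpN, opN, opN]
    congr 1
    ext C
    simp only [Set.mem_setOf_eq]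
    refine and_congr_right fun hC0 => ?_
    constructor
    · -- admissible for T1 ⇒ admissible for T_H
      intro hC f₀
      set f : G → E := fun x => f₀ ⟨x - σ (QuotientAddGroup.mk x),
        (QuotientAddGroup.eq_iff_sub_mem).mp (by rw [hσ])⟩ with hf
      have hval : ∀ (x' : G ⧸ H) (h : ↥H), f (σ x' + h) = f₀ h := by
        intro x' h
        have hmk : (QuotientAddGroup.mk (σ x' + h) : G ⧸ H) = x' := by
          conv_rhs => rw [← hσ x']
          rw [QuotientAddGroup.eq_iff_sub_mem, add_sub_cancel_left]
          exact h.2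
        show f₀ _ = f₀ h
        congr 1
        apply Subtype.ext
        show σ x' + ↑h - σ (QuotientAddGroup.mk (σ x' + ↑h)) = ↑h
        rw [hmk, add_sub_cancel_left]
      have hT1 : ∀ (x' : G ⧸ H) (ψ : AddChar H ℂ), T1 H σ f (x', ψ) = fourierT f₀ ψ := by
        intro x' ψ
        rw [T1_eq H σ hσ f x' ψ]
        congr 1
        funext h
        exact hval x' h
      have e1 : (eAvg fun p : (G ⧸ H) × AddChar H ℂ => ‖T1 H σ f p‖ ^ 2)
          = eAvg fun ψ : AddChar H ℂ => ‖fourierT f₀ ψ‖ ^ 2 := by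
        calc (eAvg fun p : (G ⧸ H) × AddChar H ℂ => ‖T1 H σ f p‖ ^ 2)
            = eAvg fun x' : G ⧸ H => eAvg fun ψ : AddChar H ℂ => ‖T1 H σ f (x', ψ)‖ ^ 2 :=
              eAvg_prod _
          _ = eAvg fun _ : G ⧸ H => eAvg fun ψ : AddChar H ℂ => ‖fourierT f₀ ψ‖ ^ 2 := by
              apply eAvg_congr; intro x'; apply eAvg_congr; intro ψ; rw [hT1 x' ψ]
          _ = eAvg fun ψ : AddChar H ℂ => ‖fourierT f₀ ψ‖ ^ 2 := eAvg_const _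
      have e2 : (eAvg fun x : G => ‖f x‖ ^ 2) = eAvg fun h : ↥H => ‖f₀ h‖ ^ 2 := by
        calc (eAvg fun x : G => ‖f x‖ ^ 2)
            = eAvg fun x' : G ⧸ H => eAvg fun h : ↥H => ‖f (σ x' + h)‖ ^ 2 :=
              eAvg_G_eq H σ hσ _
          _ = eAvg fun _ : G ⧸ H => eAvg fun h : ↥H => ‖f₀ h‖ ^ 2 := by
              apply eAvg_congr; intro x'; apply eAvg_congr; intro h; rw [hval x' h]
          _ = eAvg fun h : ↥H => ‖f₀ h‖ ^ 2 := eAvg_const _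
      calc l2N (fourierT f₀) = l2N (T1 H σ f) := by rw [l2N, l2N, e1]
        _ ≤ C * l2N f := hC f
        _ = C * l2N f₀ := by rw [l2N, l2N, e2]
    · -- admissible for T_H ⇒ admissible for T1
      intro hC f
      apply l2N_le hC0
      calc (eAvg fun p : (G ⧸ H) × AddChar H ℂ => ‖T1 H σ f p‖ ^ 2)
          = eAvg fun x' : G ⧸ H => eAvg fun ψ : AddChar H ℂ => ‖T1 H σ f (x', ψ)‖ ^ 2 :=
            eAvg_prod _
        _ = eAvg fun x' : G ⧸ H => eAvg fun ψ : AddChar H ℂ =>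
              ‖fourierT (fun h : ↥H => f (σ x' + h)) ψ‖ ^ 2 := by
            apply eAvg_congr; intro x'; apply eAvg_congr; intro ψ; rw [T1_eq H σ hσ]
        _ ≤ eAvg fun x' : G ⧸ H => C ^ 2 * eAvg fun h : ↥H => ‖f (σ x' + h)‖ ^ 2 := by
            apply eAvg_mono; intro x'
            exact sq_of_l2N_le (hC _)
        _ = C ^ 2 * eAvg fun x' : G ⧸ H => eAvg fun h : ↥H => ‖f (σ x' + h)‖ ^ 2 :=
            eAvg_mul_left _ _
        _ = C ^ 2 * eAvg fun x : G => ‖f x‖ ^ 2 := by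
            rw [← eAvg_G_eq H σ hσ (fun x : G => ‖f x‖ ^ 2)]
  · -- T2 norm
    rw [fourierOpN, opN, opN]
    congr 1
    ext C
    simp only [Set.mem_setOf_eq]
    refine and_congr_right fun hC0 => ?_
    obtain ⟨s, e, he, hres, hs1⟩ := exists_prodEquiv H σ hσ
    have hT2 : ∀ (g : (G ⧸ H) × AddChar H ℂ → E) (ψ : AddChar H ℂ) (κ : AddChar (G ⧸ H) ℂ),
        T2 H σ g (e (ψ, κ)) = fourierT (fun x' => s ψ (σ x') • g (x', ψ)) κ := by
      intro g ψ κ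
      have hcomp : (e (ψ, κ)).compAddMonoidHom H.subtype = ψ := by
        show resHom H (e (ψ, κ)) = ψ
        rw [he, map_mul, hres, res_liftChar, mul_one]
      rw [T2, fourierT, hcomp]
      congr 1
      funext x'
      rw [he]
      show ((s ψ * liftChar H κ) (σ x')) • g (x', ψ) = κ x' • (s ψ) (σ x') • g (x', ψ)
      rw [AddChar.mul_apply, liftChar_apply, hσ, smul_smul, mul_comm]
    have hnorm : ∀ (ψ : AddChar H ℂ) (x' : G ⧸ H) (v : E), ‖s ψ (σ x') • v‖ = ‖v‖ := by
      intro ψ x' v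
      rw [norm_smul, AddChar.norm_apply, one_mul]
    constructor
    · -- admissible for T2 ⇒ admissible for T_{G/H}
      intro hC g₀
      set g : (G ⧸ H) × AddChar H ℂ → E := fun p => if p.2 = 1 then g₀ p.1 else 0 with hg
      have hT2g : ∀ (ψ : AddChar H ℂ) (κ : AddChar (G ⧸ H) ℂ),
          T2 H σ g (e (ψ, κ)) = if ψ = 1 then fourierT g₀ κ else 0 := by
        intro ψ κ
        rw [hT2 g ψ κ]
        by_cases h1 : ψ = 1
        · subst h1
          rw [if_pos rfl]
          congr 1
          funext x'
          show (s 1) (σ x') • g (x', 1) = g₀ x'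
          rw [hs1, AddChar.one_apply, one_smul]
          show (if (1 : AddChar H ℂ) = 1 then g₀ x' else 0) = g₀ x'
          rw [if_pos rfl]
        · rw [if_neg h1]
          have h0 : (fun x' : G ⧸ H => s ψ (σ x') • g (x', ψ)) = fun _ => (0 : E) := by
            funext x'
            show s ψ (σ x') • (if ψ = 1 then g₀ x' else 0) = 0
            rw [if_neg h1, smul_zero]
          rw [h0, fourierT]
          simp only [smul_zero]
          exact vAvg_zero
      have hval1 : ∀ (x' : G ⧸ H), g (x', 1) = g₀ x' := by
        intro x'
        show (if (1 : AddChar H ℂ) = 1 then g₀ x' else 0) = g₀ x'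
        rw [if_pos rfl]
      have hval0 : ∀ (x' : G ⧸ H) (ψ : AddChar H ℂ), ψ ≠ 1 → g (x', ψ) = 0 := by
        intro x' ψ h1
        show (if ψ = 1 then g₀ x' else 0) = 0
        rw [if_neg h1]
      have := Fintype.ofFinite (AddChar H ℂ)
      have e1 : (eAvg fun χ : AddChar G ℂ => ‖T2 H σ g χ‖ ^ 2)
          = (eAvg fun κ : AddChar (G ⧸ H) ℂ => ‖fourierT g₀ κ‖ ^ 2) / Nat.card (AddChar H ℂ) := by
        calc (eAvg fun χ : AddChar G ℂ => ‖T2 H σ g χ‖ ^ 2)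
            = eAvg fun p : AddChar H ℂ × AddChar (G ⧸ H) ℂ => ‖T2 H σ g (e p)‖ ^ 2 :=
              (eAvg_comp_equiv e _).symm
          _ = eAvg fun ψ : AddChar H ℂ => eAvg fun κ : AddChar (G ⧸ H) ℂ =>
                ‖T2 H σ g (e (ψ, κ))‖ ^ 2 := eAvg_prod _
          _ = (eAvg fun κ : AddChar (G ⧸ H) ℂ => ‖fourierT g₀ κ‖ ^ 2) /
                Nat.card (AddChar H ℂ) := by
              rw [eAvg_eq_sum]
              congr 1
              rw [Finset.sum_eq_single_of_mem (1 : AddChar H ℂ) (Finset.mem_univ _)]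
              · apply eAvg_congr; intro κ; rw [hT2g, if_pos rfl]
              · intro ψ _ h1
                have hz : ∀ κ : AddChar (G ⧸ H) ℂ, ‖T2 H σ g (e (ψ, κ))‖ ^ 2 = 0 := by
                  intro κ; rw [hT2g, if_neg h1]; simp
                rw [eAvg_congr hz]
                rw [eAvg_const (0 : ℝ)]
      have e2 : (eAvg fun p : (G ⧸ H) × AddChar H ℂ => ‖g p‖ ^ 2)
          = (eAvg fun x' : G ⧸ H => ‖g₀ x'‖ ^ 2) / Nat.card (AddChar H ℂ) := by
        calc (eAvg fun p : (G ⧸ H) × AddChar H ℂ => ‖g p‖ ^ 2)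
            = eAvg fun x' : G ⧸ H => eAvg fun ψ : AddChar H ℂ => ‖g (x', ψ)‖ ^ 2 :=
              eAvg_prod _
          _ = eAvg fun x' : G ⧸ H => (‖g₀ x'‖ ^ 2) / Nat.card (AddChar H ℂ) := by
              apply eAvg_congr; intro x'
              rw [eAvg_eq_sum]
              congr 1
              rw [Finset.sum_eq_single_of_mem (1 : AddChar H ℂ) (Finset.mem_univ _)]
              · rw [hval1]
              · intro ψ _ h1
                rw [hval0 x' ψ h1]
                simp
          _ = (eAvg fun x' : G ⧸ H => ‖g₀ x'‖ ^ 2) / Nat.card (AddChar H ℂ) :=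
              eAvg_div_const _ _
      have hfin : (0 : ℝ) < Nat.card (AddChar H ℂ) := by exact_mod_cast Nat.card_pos
      apply l2N_le hC0
      have hq := sq_of_l2N_le (hC g)
      rw [e1, e2, ← mul_div_assoc] at hq
      exact (div_le_div_iff_of_pos_right hfin).mp hq
    · -- admissible for T_{G/H} ⇒ admissible for T2
      intro hC g
      apply l2N_le hC0
      have hswap : (eAvg fun p : (G ⧸ H) × AddChar H ℂ => ‖g p‖ ^ 2)
          = eAvg fun ψ : AddChar H ℂ => eAvg fun x' : G ⧸ H => ‖g (x', ψ)‖ ^ 2 := by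
        rw [← eAvg_comp_equiv (Equiv.prodComm (AddChar H ℂ) (G ⧸ H))
            (fun p : (G ⧸ H) × AddChar H ℂ => ‖g p‖ ^ 2)]
        exact eAvg_prod _
      calc (eAvg fun χ : AddChar G ℂ => ‖T2 H σ g χ‖ ^ 2)
          = eAvg fun p : AddChar H ℂ × AddChar (G ⧸ H) ℂ => ‖T2 H σ g (e p)‖ ^ 2 :=
            (eAvg_comp_equiv e _).symm
        _ = eAvg fun ψ : AddChar H ℂ => eAvg fun κ : AddChar (G ⧸ H) ℂ =>
              ‖T2 H σ g (e (ψ, κ))‖ ^ 2 := eAvg_prod _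
        _ = eAvg fun ψ : AddChar H ℂ => eAvg fun κ : AddChar (G ⧸ H) ℂ =>
              ‖fourierT (fun x' => s ψ (σ x') • g (x', ψ)) κ‖ ^ 2 := by
            apply eAvg_congr; intro ψ; apply eAvg_congr; intro κ; rw [hT2]
        _ ≤ eAvg fun ψ : AddChar H ℂ =>
              C ^ 2 * eAvg fun x' : G ⧸ H => ‖s ψ (σ x') • g (x', ψ)‖ ^ 2 := by
            apply eAvg_mono; intro ψ
            exact sq_of_l2N_le (hC _)
        _ = eAvg fun ψ : AddChar H ℂ => C ^ 2 * eAvg fun x' : G ⧸ H => ‖g (x', ψ)‖ ^ 2 := by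
            apply eAvg_congr; intro ψ; congr 1; apply eAvg_congr; intro x'; rw [hnorm]
        _ = C ^ 2 * eAvg fun ψ : AddChar H ℂ => eAvg fun x' : G ⧸ H => ‖g (x', ψ)‖ ^ 2 :=
            eAvg_mul_left _ _
        _ = C ^ 2 * eAvg fun p : (G ⧸ H) × AddChar H ℂ => ‖g p‖ ^ 2 := by rw [hswap]
end
end

section
/- Let G be a topological group, K a compact subgroup equipped with its Haar probability measure dk, and E a uniformly convex complex Banach space. Let π be a representation of G on E by linear isometries such that for each v ∈ E the map g ↦ π(g)v is continuous. Let x ∈ E with ‖x‖ = 1 be such that for every g ∈ G the Bochner integral ∫_K π(k)π(g)x dk equals x. Then π(g)x = x for every g ∈ G. -/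
set_option autoImplicit false
open MeasureTheory

/-!
The vectors `π k (π g x)`, `k ∈ K`, lie on the unit sphere and average to the unit vector `x`.
In a strictly (e.g. uniformly) convex space this forces them to equal `x` for almost every
`k`, hence, by continuity and because Haar measure charges every nonempty open set, for
every `k`; take `k = 1`.
-/

theorem ae_eq_const_of_norm_le_one_of_integral_eq {α E : Type*} [MeasurableSpace α]
    {μ : Measure α} [IsProbabilityMeasure μ] [NormedAddCommGroup E] [NormedSpace ℝ E]
    [CompleteSpace E] [StrictConvexSpace ℝ E] {f : α → E} {x : E}
    (hf : ∀ᵐ a ∂μ, ‖f a‖ ≤ 1) (hfx : ∫ a, f a ∂μ = x) (hx : ‖x‖ = 1) :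
    f =ᵐ[μ] Function.const α x := by
  have := ae_eq_const_or_norm_integral_lt_of_norm_le_const hf
  simpa [average_eq_integral, hfx, hx] using this

theorem statement13_general {G : Type*} [Group G] [TopologicalSpace G]
    (K : Subgroup G) [MeasurableSpace K]
    (μ : Measure K) [μ.IsHaarMeasure] [IsProbabilityMeasure μ]
    {E : Type*} [NormedAddCommGroup E] [NormedSpace ℂ E] [CompleteSpace E]
    [UniformConvexSpace E]
    (π : G → E →L[ℂ] E)
    (hone : π 1 = ContinuousLinearMap.id ℂ E)
    (hiso : ∀ (g : G) (v : E), ‖π g v‖ = ‖v‖)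
    (hcont : ∀ v : E, Continuous fun g : G => π g v)
    (x : E) (hx : ‖x‖ = 1)
    (hfix : ∀ g : G, (∫ k : K, π (k : G) (π g x) ∂μ) = x) :
    ∀ g : G, π g x = x := by
  intro g
  have hae : (fun k : K => π (k : G) (π g x)) =ᵐ[μ] Function.const K x :=
    ae_eq_const_of_norm_le_one_of_integral_eq
      (.of_forall fun k => by rw [hiso, hiso, hx]) (hfix g) hx
  have hconst : (fun k : K => π (k : G) (π g x)) = Function.const K x :=
    ((hcont _).comp continuous_subtype_val).ae_eq_iff_eq μ continuous_const |>.mp hae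
  simpa [hone] using congrFun hconst 1

/-- Lemma 4.4: averaging over a compact subgroup and uniform
convexity force invariance. -/
theorem statement13 {G : Type*} [Group G] [TopologicalSpace G] [IsTopologicalGroup G]
    (K : Subgroup G) [CompactSpace K] [MeasurableSpace K] [BorelSpace K]
    (μ : Measure K) [μ.IsHaarMeasure] [IsProbabilityMeasure μ]
    {E : Type*} [NormedAddCommGroup E] [NormedSpace ℂ E] [CompleteSpace E]
    [UniformConvexSpace E]
    (π : G → E →L[ℂ] E)
    (hmul : ∀ g g' : G, π (g * g') = (π g).comp (π g'))
    (hone : π 1 = ContinuousLinearMap.id ℂ E)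
    (hiso : ∀ (g : G) (v : E), ‖π g v‖ = ‖v‖)
    (hcont : ∀ v : E, Continuous fun g : G => π g v)
    (x : E) (hx : ‖x‖ = 1)
    (hfix : ∀ g : G, (∫ k : K, π (k : G) (π g x) ∂μ) = x) :
    ∀ g : G, π g x = x :=
  statement13_general K μ π hone hiso hcont x hx hfix
end

section
/- Let D ≥ 1 be a real number and let (X_i)_{i∈ℕ} be a sequence of finite connected graphs, with graph metric d_i, such that for every i, every vertex x ∈ X_i and every k ∈ ℕ, the ball {y ∈ X_i : d_i(x,y) ≤ k} has at most D^k elements, and such that #X_i → ∞ as i → ∞. Let ρ : ℕ → ℝ₊ be a function with ρ(a) → ∞ as a → ∞. Then 𝔼_{(x,y)∈X_i×X_i} ρ(d_i(x,y))² → ∞ as i → ∞. -/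
set_option autoImplicit false
noncomputable section

universe u

/-- in a sequence of bounded-degree finite connected graphs whose
sizes tend to infinity, the average of `ρ(d(x,y))²` tends to infinity for any
`ρ → ∞`. -/
theorem statement18 {X : ℕ → Type u} [∀ i, Fintype (X i)]
    (Gr : ∀ i, SimpleGraph (X i)) (hconn : ∀ i, (Gr i).Connected)
    (D : ℝ) (hD : 1 ≤ D)
    (hball : ∀ (i : ℕ) (x : X i) (k : ℕ),
      (Nat.card {y : X i // (Gr i).dist x y ≤ k} : ℝ) ≤ D ^ k)
    (hcard : Filter.Tendsto (fun i => Nat.card (X i)) Filter.atTop Filter.atTop)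
    (ρ : ℕ → ℝ) (hρ0 : ∀ a, 0 ≤ ρ a)
    (hρ : Filter.Tendsto ρ Filter.atTop Filter.atTop) :
    Filter.Tendsto
      (fun i => eAvg fun p : X i × X i => ρ ((Gr i).dist p.1 p.2) ^ 2)
      Filter.atTop Filter.atTop := by
  rw [Filter.tendsto_atTop]
  intro M
  set c : ℝ := 2 * max M 1 with hc
  have hc1 : (1 : ℝ) ≤ max M 1 := le_max_right _ _
  have hcpos : (0 : ℝ) < c := by rw [hc]; nlinarith
  obtain ⟨b, hb⟩ := Filter.eventually_atTop.mp (hρ.eventually_ge_atTop (Real.sqrt c))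
  have hρc : ∀ a, b ≤ a → c ≤ ρ a ^ 2 := by
    intro a ha
    have h1 := hb a ha
    nlinarith [Real.sq_sqrt hcpos.le, Real.sqrt_nonneg c, hρ0 a]
  have hDb : (1 : ℝ) ≤ D ^ b := one_le_pow₀ hD
  filter_upwards [hcard.eventually_ge_atTop ⌈2 * D ^ b⌉₊] with i hi
  haveI : Nonempty (X i) := (hconn i).nonempty
  set n : ℕ := Nat.card (X i) with hn
  have hn2 : (2 : ℝ) * D ^ b ≤ n := le_trans (Nat.le_ceil _) (by exact_mod_cast hi)
  have hnpos : (0 : ℝ) < n := lt_of_lt_of_le (by nlinarith) hn2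
  set f : X i × X i → ℝ := fun p => ρ ((Gr i).dist p.1 p.2) ^ 2 with hf
  -- bad pairs: distance < b
  set Bad : Finset (X i × X i) :=
    Finset.univ.filter (fun p : X i × X i => (Gr i).dist p.1 p.2 < b) with hBad
  set Good : Finset (X i × X i) :=
    Finset.univ.filter (fun p : X i × X i => ¬ (Gr i).dist p.1 p.2 < b) with hGood
  have hbadcard : (Bad.card : ℝ) ≤ n * D ^ b := by
    have hsub : Bad ⊆ Finset.univ.filter (fun p : X i × X i => (Gr i).dist p.1 p.2 ≤ b) := by
      intro p hp
      simp only [hBad, Finset.mem_filter, Finset.mem_univ, true_and] at hp ⊢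
      exact hp.le
    have h1 : ((Finset.univ.filter
        (fun p : X i × X i => (Gr i).dist p.1 p.2 ≤ b)).card : ℝ) ≤ n * D ^ b := by
      have heq : (Finset.univ.filter (fun p : X i × X i => (Gr i).dist p.1 p.2 ≤ b)).card
          = ∑ x : X i, (Finset.univ.filter (fun y => (Gr i).dist x y ≤ b)).card := by
        rw [Finset.card_filter, Fintype.sum_prod_type]
        simp only [Finset.card_filter]
      rw [heq]
      push_cast
      calc ∑ x : X i, ((Finset.univ.filter (fun y => (Gr i).dist x y ≤ b)).card : ℝ)
          ≤ ∑ _x : X i, D ^ b := by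
            refine Finset.sum_le_sum (fun x _ => ?_)
            have h2 := hball i x b
            rwa [Nat.card_eq_fintype_card, Fintype.card_subtype] at h2
        _ = n * D ^ b := by
            rw [Finset.sum_const, nsmul_eq_mul, Finset.card_univ, hn, Nat.card_eq_fintype_card]
    exact le_trans (by exact_mod_cast Finset.card_le_card hsub) h1
  have hsplit : Bad.card + Good.card = n * n := by
    rw [hBad, hGood, Finset.card_filter_add_card_filter_not]
    simp [hn, Nat.card_eq_fintype_card]
  have hgoodcard : (n : ℝ) * n - n * D ^ b ≤ (Good.card : ℝ) := by
    have : (Bad.card : ℝ) + Good.card = (n : ℝ) * n := by exact_mod_cast hsplit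
    linarith
  have hsum : c * ((n : ℝ) * n - n * D ^ b) ≤ ∑ p : X i × X i, f p := by
    calc c * ((n : ℝ) * n - n * D ^ b) ≤ c * Good.card := by
          exact mul_le_mul_of_nonneg_left hgoodcard hcpos.le
      _ = ∑ _p ∈ Good, c := by rw [Finset.sum_const, nsmul_eq_mul, mul_comm]
      _ ≤ ∑ p ∈ Good, f p := by
          refine Finset.sum_le_sum (fun p hp => ?_)
          have hpb : b ≤ (Gr i).dist p.1 p.2 := by
            have := (Finset.mem_filter.mp hp).2
            omega
          exact hρc _ hpb
      _ ≤ ∑ p : X i × X i, f p :=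
          Finset.sum_le_sum_of_subset_of_nonneg (Finset.filter_subset _ _)
            (fun p _ _ => by positivity)
  have havg : eAvg f = (∑ p : X i × X i, f p) / ((n : ℝ) * n) := by
    rw [eAvg, finsum_eq_sum_of_fintype]
    congr 1
    rw [Nat.card_prod]
    push_cast [hn]
    ring
  rw [havg, le_div_iff₀ (by positivity)]
  have hM : M ≤ max M 1 := le_max_left _ _
  have key : M * ((n : ℝ) * n) ≤ c * ((n : ℝ) * n - n * D ^ b) := by
    have h2 : (0 : ℝ) ≤ (max M 1) * ((n : ℝ) * n - 2 * (n * D ^ b)) := by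
      refine mul_nonneg (by linarith) ?_
      nlinarith
    rw [hc]
    nlinarith [mul_nonneg hnpos.le hnpos.le]
  linarith
end
end
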